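/- Let A be a Shin–Zettl matrix of order m on a finite interval [a,b] with A = A⁺, and let Γ₁, Γ₂ : Dom(L_max) → ℂ^m be the boundary maps defined below (even case m = 2n with n ≥ 2, or odd case m = 2n+1 with n ≥ 1 and coefficients α, β, γ, δ with αδ − βγ ≠ 0). Then the joint map y ↦ (Γ₁y, Γ₂y) from Dom(L_max) to ℂ^m × ℂ^m is surjective: for any f₁, f₂ ∈ ℂ^m there exists y ∈ Dom(L_max) with Γ₁y = f₁ and Γ₂y = f₂. -/

import Mathlib

open MeasureTheory Set Matrix Filter
open scoped ComplexInnerProductSpace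

noncomputable section

/-- Lebesgue measure restricted to the interval `[a,b]`. -/
def muab (a b : ℝ) : MeasureTheory.Measure ℝ := MeasureTheory.volume.restrict (Set.Icc a b)

/-- `A` is a Shin–Zettl matrix of order `m` on `[a,b]`. -/
structure IsShinZettl (a b : ℝ) {m : ℕ} (A : ℝ → Matrix (Fin m) (Fin m) ℂ) : Prop where
  eq_zero_of_gt : ∀ (k s : Fin m), (k : ℕ) + 1 < (s : ℕ) → ∀ t : ℝ, A t k s = 0
  integrable : ∀ (k s : Fin m), MeasureTheory.IntegrableOn (fun t => A t k s) (Set.Icc a b)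
  superdiag_ne_zero : ∀ (k s : Fin m), (s : ℕ) = (k : ℕ) + 1 →
    ∀ᵐ t ∂(muab a b), A t k s ≠ 0

/-- `HasQD a b A y w f` : for `k < m` the function `w k` is the `k`-th quasi-derivative of
`y = w 0` relative to the Shin–Zettl matrix `A`, each being absolutely continuous on `[a,b]`
(an indefinite integral of an `L¹` function), and `f` is the `m`-th quasi-derivative `D^[m]y`. -/
def HasQD (a b : ℝ) {m : ℕ} (A : ℝ → Matrix (Fin m) (Fin m) ℂ)
    (y : ℝ → ℂ) (w : Fin m → ℝ → ℂ) (f : ℝ → ℂ) : Prop :=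
  (∀ j : Fin m, (j : ℕ) = 0 → w j = y) ∧
  MeasureTheory.IntegrableOn f (Set.Icc a b) ∧
  ∀ j : Fin m,
    MeasureTheory.IntegrableOn
      (fun s => (∑ k, A s j k * w k s) + (if (j : ℕ) + 1 = m then f s else 0)) (Set.Icc a b) ∧
    ∀ t ∈ Set.Icc a b,
      w j t = w j a +
        ∫ s in a..t, ((∑ k, A s j k * w k s) + (if (j : ℕ) + 1 = m then f s else 0))

/-- The Hilbert space `L²([a,b],ℂ)`. -/
abbrev L2C (a b : ℝ) := MeasureTheory.Lp ℂ 2 (muab a b)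

/-- The graph of the maximal quasi-differential operator `L_max` in `L²([a,b],ℂ)`. -/
def maxGraph (a b : ℝ) {m : ℕ} (A : ℝ → Matrix (Fin m) (Fin m) ℂ) :
    Set (L2C a b × L2C a b) :=
  {p | ∃ y w f, HasQD a b A y w f ∧ MeasureTheory.MemLp f 2 (muab a b) ∧
    (⇑p.1 =ᵐ[muab a b] y) ∧ (⇑p.2 =ᵐ[muab a b] fun t => Complex.I ^ m * f t)}

/-- The graph of the minimal quasi-differential operator `L_min` in `L²([a,b],ℂ)`. -/
def minGraph (a b : ℝ) {m : ℕ} (A : ℝ → Matrix (Fin m) (Fin m) ℂ) :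
    Set (L2C a b × L2C a b) :=
  {p | ∃ y w f, HasQD a b A y w f ∧ MeasureTheory.MemLp f 2 (muab a b) ∧
    (⇑p.1 =ᵐ[muab a b] y) ∧ (⇑p.2 =ᵐ[muab a b] fun t => Complex.I ^ m * f t) ∧
    ∀ j : Fin m, w j a = 0 ∧ w j b = 0}

/-- The matrix `Λ_m`: `(Λ_m)_{j,k} = (−1)^j` if `j + k = m + 1` (1-based indexing),
`0` otherwise. -/
def LambdaM (m : ℕ) : Matrix (Fin m) (Fin m) ℂ :=
  Matrix.of fun j k => if (j : ℕ) + (k : ℕ) = m - 1 then (-1 : ℂ) ^ ((j : ℕ) + 1) else 0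

/-- The formally adjoint (Lagrange adjoint) matrix `A⁺ = −Λ_m⁻¹ conj(Aᵀ) Λ_m`. -/
def formalAdjoint {m : ℕ} (A : ℝ → Matrix (Fin m) (Fin m) ℂ) :
    ℝ → Matrix (Fin m) (Fin m) ℂ :=
  fun t => -((LambdaM m)⁻¹ * (A t)ᴴ * LambdaM m)

/-- The graph of the Hilbert-space adjoint of the operator whose graph is `S`:
`(g, h)` belongs to it iff `⟪T y, g⟫ = ⟪y, h⟫` for every `(y, T y) ∈ S`. -/
def adjointRel {a b : ℝ} (S : Set (L2C a b × L2C a b)) : Set (L2C a b × L2C a b) :=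
  {q | ∀ p ∈ S, ⟪p.2, q.1⟫ = ⟪p.1, q.2⟫}

/-- The boundary map `Γ₁` for even order `m = 2n`:
`Γ₁y = i^{2n} (−D^[2n−1]y(a), …, (−1)^n D^[n]y(a), D^[2n−1]y(b), …, (−1)^{n−1} D^[n]y(b))`.
The index `j < n` corresponds to `k = j+1 ∈ {1,…,n}` and the value is
`i^{2n}(−1)^k D^[2n−k]y(a)`; for `n ≤ j < 2n` (`k = j−n+1`) it is
`i^{2n}(−1)^{k−1} D^[2n−k]y(b)`.  Here `w k = D^[k]y`. -/
def Gamma1E (a b : ℝ) {n : ℕ} (w : Fin (2 * n) → ℝ → ℂ) : Fin (2 * n) → ℂ := fun j =>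
  if (j : ℕ) < n then
    Complex.I ^ (2 * n) * (-1 : ℂ) ^ ((j : ℕ) + 1) *
      w ⟨2 * n - 1 - (j : ℕ), by have := j.isLt; omega⟩ a
  else
    Complex.I ^ (2 * n) * (-1 : ℂ) ^ ((j : ℕ) - n) *
      w ⟨2 * n - 1 - ((j : ℕ) - n), by have := j.isLt; omega⟩ b

/-- The boundary map `Γ₂` for even order `m = 2n`:
`Γ₂y = (D^[0]y(a), …, D^[n−1]y(a), D^[0]y(b), …, D^[n−1]y(b))`.  Here `w k = D^[k]y`. -/
def Gamma2E (a b : ℝ) {n : ℕ} (w : Fin (2 * n) → ℝ → ℂ) : Fin (2 * n) → ℂ := fun j =>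
  if (j : ℕ) < n then w j a
  else w ⟨(j : ℕ) - n, by have := j.isLt; omega⟩ b
/-- The boundary map `Γ₁` for odd order `m = 2n+1` with coefficients `α, β`:
for `j < n` (`k = j+1 ∈ {1,…,n}`) the value is `i^{2n+1}(−1)^k D^[2n+1−k]y(a)`; for
`n ≤ j < 2n` (`k = j−n+1`) it is `i^{2n+1}(−1)^{k−1} D^[2n+1−k]y(b)`; the last component
is `i^{2n+1}(α D^[n]y(b) + β D^[n]y(a))`.  Here `w k = D^[k]y`. -/
def Gamma1O (a b : ℝ) {n : ℕ} (αc βc : ℂ) (w : Fin (2 * n + 1) → ℝ → ℂ) :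
    Fin (2 * n + 1) → ℂ := fun j =>
  if (j : ℕ) < n then
    Complex.I ^ (2 * n + 1) * (-1 : ℂ) ^ ((j : ℕ) + 1) *
      w ⟨2 * n - (j : ℕ), by omega⟩ a
  else if (j : ℕ) < 2 * n then
    Complex.I ^ (2 * n + 1) * (-1 : ℂ) ^ ((j : ℕ) - n) *
      w ⟨2 * n - ((j : ℕ) - n), by omega⟩ b
  else
    Complex.I ^ (2 * n + 1) * (αc * w ⟨n, by omega⟩ b + βc * w ⟨n, by omega⟩ a)

/-- The boundary map `Γ₂` for odd order `m = 2n+1` with coefficients `γ, δ`: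
for `j < n` (`k = j+1`) the value is `D^[k−1]y(a)`; for `n ≤ j < 2n` (`k = j−n+1`) it is
`D^[k−1]y(b)`; the last component is `γ D^[n]y(b) + δ D^[n]y(a)`.  Here `w k = D^[k]y`. -/
def Gamma2O (a b : ℝ) {n : ℕ} (γc δc : ℂ) (w : Fin (2 * n + 1) → ℝ → ℂ) :
    Fin (2 * n + 1) → ℂ := fun j =>
  if (j : ℕ) < n then w j a
  else if (j : ℕ) < 2 * n then w ⟨(j : ℕ) - n, by omega⟩ b
  else γc * w ⟨n, by omega⟩ b + δc * w ⟨n, by omega⟩ a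

/-!
The boundary maps `Γ₁, Γ₂` depend only on the boundary values `(D^[k]y(a), D^[k]y(b))_{k<m}`, and
through them invertibly (for odd `m` the middle pair is recovered because `αδ - βγ ≠ 0`). So it
suffices that every pair `(w(a), w(b)) ∈ ℂ^m × ℂ^m` is attained on `Dom(L_max)`. The attained pairs
form a subspace. Pairing a functional that vanishes on it with the solution `z` of the adjoint
system `z' = -Aᵀ z`, the Lagrange identity forces the last component of `z` to vanish, and since
the superdiagonal of `A` is nonzero a.e. all of `z` vanishes, hence so does the functional.
Solutions of the first-order systems `w' = A w + f eₘ` with `L¹` coefficients are obtained by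
Picard iteration.
-/

namespace ShinZettl

open scoped Topology ComplexConjugate

section LinearSystem

variable {m : ℕ}

def entrywiseNorm (M : ℝ → Matrix (Fin m) (Fin m) ℂ) (s : ℝ) : ℝ :=
  ∑ p : Fin m × Fin m, ‖M s p.1 p.2‖

def linearField (M : ℝ → Matrix (Fin m) (Fin m) ℂ) (F : Fin m → ℝ → ℂ)
    (w : ℝ → Fin m → ℂ) (j : Fin m) (s : ℝ) : ℂ :=
  ∑ k, M s j k * w s k + F j s

def SolvesOn (M : ℝ → Matrix (Fin m) (Fin m) ℂ) (F : Fin m → ℝ → ℂ) (x y : ℝ)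
    (w : ℝ → Fin m → ℂ) : Prop :=
  ∀ j, ∀ t ∈ Icc x y, w t j = w x j + ∫ s in x..t, linearField M F w j s

variable {M : ℝ → Matrix (Fin m) (Fin m) ℂ} {F : Fin m → ℝ → ℂ} {x y : ℝ}

lemma integrableOn_entrywiseNorm {S : Set ℝ} (hM : ∀ j k, IntegrableOn (fun t => M t j k) S) :
    IntegrableOn (entrywiseNorm M) S :=
  integrable_finsetSum _ fun p _ => (hM p.1 p.2).norm

lemma norm_sum_mul_le_entrywiseNorm (s : ℝ) (j : Fin m) {v : Fin m → ℂ} {C : ℝ}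
    (hC0 : 0 ≤ C) (hC : ∀ k, ‖v k‖ ≤ C) :
    ‖∑ k, M s j k * v k‖ ≤ entrywiseNorm M s * C := by
  have hrow : ∑ k, ‖M s j k‖ ≤ entrywiseNorm M s := by
    rw [entrywiseNorm, Fintype.sum_prod_type]
    exact Finset.single_le_sum (f := fun j' => ∑ k, ‖M s j' k‖)
      (fun _ _ => Finset.sum_nonneg fun _ _ => norm_nonneg _) (Finset.mem_univ j)
  calc ‖∑ k, M s j k * v k‖ ≤ ∑ k, ‖M s j k‖ * C := by
        refine (norm_sum_le _ _).trans (Finset.sum_le_sum fun k _ => ?_)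
        rw [norm_mul]
        exact mul_le_mul_of_nonneg_left (hC k) (norm_nonneg _)
    _ = (∑ k, ‖M s j k‖) * C := (Finset.sum_mul ..).symm
    _ ≤ entrywiseNorm M s * C := mul_le_mul_of_nonneg_right hrow hC0

lemma integrableOn_linearField (hM : ∀ j k, IntegrableOn (fun t => M t j k) (Icc x y))
    (hF : ∀ j, IntegrableOn (F j) (Icc x y)) {u : ℝ → Fin m → ℂ}
    (hu : ContinuousOn u (Icc x y)) (j : Fin m) :
    IntegrableOn (linearField M F u j) (Icc x y) :=
  (integrable_finsetSum _ fun k _ => (hM j k).mul_continuousOn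
    ((continuous_apply k).comp_continuousOn hu) isCompact_Icc).add (hF j)

lemma intervalIntegrable_linearField (hM : ∀ j k, IntegrableOn (fun t => M t j k) (Icc x y))
    (hF : ∀ j, IntegrableOn (F j) (Icc x y)) {u : ℝ → Fin m → ℂ}
    (hu : ContinuousOn u (Icc x y)) (j : Fin m) {t₀ t₁ : ℝ} (h₀ : t₀ ∈ Icc x y)
    (h₁ : t₁ ∈ Icc x y) : IntervalIntegrable (linearField M F u j) volume t₀ t₁ :=
  ((integrableOn_linearField hM hF hu j).mono_set (uIcc_subset_Icc h₀ h₁)).intervalIntegrable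

lemma norm_integral_linearField_sub_le (hM : ∀ j k, IntegrableOn (fun t => M t j k) (Icc x y))
    (hF : ∀ j, IntegrableOn (F j) (Icc x y)) {u v : ℝ → Fin m → ℂ}
    (hu : ContinuousOn u (Icc x y)) (hv : ContinuousOn v (Icc x y)) {C : ℝ} (hC0 : 0 ≤ C)
    (hC : ∀ s ∈ Icc x y, ∀ k, ‖u s k - v s k‖ ≤ C) (j : Fin m) {τ t : ℝ}
    (hτ : τ ∈ Icc x y) (ht : t ∈ Icc x y) :
    ‖(∫ s in τ..t, linearField M F u j s) - ∫ s in τ..t, linearField M F v j s‖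
      ≤ (∫ s in x..y, entrywiseNorm M s) * C := by
  have hdiff : IntegrableOn (fun s => ‖linearField M F u j s - linearField M F v j s‖)
      (Ioc x y) :=
    IntegrableOn.mono_set ((integrableOn_linearField hM hF hu j).sub
      (integrableOn_linearField hM hF hv j)).norm Ioc_subset_Icc_self
  have hsub : uIoc τ t ⊆ Ioc x y := Ioc_subset_Ioc (le_min hτ.1 ht.1) (max_le hτ.2 ht.2)
  rw [← intervalIntegral.integral_sub (intervalIntegrable_linearField hM hF hu j hτ ht)
    (intervalIntegrable_linearField hM hF hv j hτ ht),
    intervalIntegral.integral_of_le (hτ.1.trans hτ.2), ← integral_mul_const]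
  calc _ ≤ ∫ s in uIoc τ t, ‖linearField M F u j s - linearField M F v j s‖ :=
        intervalIntegral.norm_integral_le_integral_norm_uIoc
    _ ≤ ∫ s in Ioc x y, ‖linearField M F u j s - linearField M F v j s‖ :=
        setIntegral_mono_set hdiff (Eventually.of_forall fun _ => norm_nonneg _)
          hsub.eventuallyLE
    _ ≤ ∫ s in Ioc x y, entrywiseNorm M s * C := by
        refine setIntegral_mono_on hdiff ((integrableOn_entrywiseNorm hM).mono_set
          Ioc_subset_Icc_self |>.mul_const _) measurableSet_Ioc fun s hs => ?_
        have hs' : s ∈ Icc x y := Ioc_subset_Icc_self hs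
        simp only [linearField, add_sub_add_right_eq_sub, ← Finset.sum_sub_distrib, ← mul_sub]
        exact norm_sum_mul_le_entrywiseNorm s j hC0 (hC s hs')

lemma eq_add_intervalIntegral_of_eq_add {g W : ℝ → ℂ} {c : ℂ} {τ : ℝ}
    (hg : IntegrableOn g (Icc x y)) (hτ : τ ∈ Icc x y)
    (hW : ∀ t ∈ Icc x y, W t = c + ∫ s in τ..t, g s) :
    ∀ t ∈ Icc x y, W t = W x + ∫ s in x..t, g s := by
  intro t ht
  have hx : x ∈ Icc x y := left_mem_Icc.2 (ht.1.trans ht.2)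
  rw [hW t ht, hW x hx, add_assoc, intervalIntegral.integral_add_adjacent_intervals
    (hg.mono_set (uIcc_subset_Icc hτ hx)).intervalIntegrable
    (hg.mono_set (uIcc_subset_Icc hx ht)).intervalIntegrable]

lemma exists_solvesOn_of_integral_le (hM : ∀ j k, IntegrableOn (fun t => M t j k) (Icc x y))
    (hF : ∀ j, IntegrableOn (F j) (Icc x y))
    (hsmall : ∫ s in x..y, entrywiseNorm M s ≤ 1 / 2) {τ : ℝ} (hτ : τ ∈ Icc x y)
    (c : Fin m → ℂ) : ∃ w, Continuous w ∧ w τ = c ∧ SolvesOn M F x y w := by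
  have hxy : x ≤ y := hτ.1.trans hτ.2
  let X := C(Icc x y, Fin m → ℂ)
  let ext : X → ℝ → Fin m → ℂ := fun u s => u (projIcc x y hxy s)
  have hext : ∀ u, Continuous (ext u) := fun u => u.continuous.comp continuous_projIcc
  have hprim : ∀ u j, ContinuousOn (fun t => ∫ s in τ..t, linearField M F (ext u) j s)
      (Icc x y) := fun u j => by
    simpa [uIcc_of_le hxy] using intervalIntegral.continuousOn_primitive_interval' (a := τ)
      (intervalIntegrable_linearField hM hF (hext u).continuousOn j
        (left_mem_Icc.2 hxy) (right_mem_Icc.2 hxy)) (by rwa [uIcc_of_le hxy])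
  let T : X → X := fun u =>
    ⟨fun t j => c j + ∫ s in τ..t, linearField M F (ext u) j s,
      continuous_pi fun j => continuous_const.add (hprim u j).domRestrict⟩
  have hT : ContractingWith (1 / 2) T := by
    refine ⟨by rw [← NNReal.coe_lt_coe]; norm_num, LipschitzWith.of_dist_le_mul fun u v => ?_⟩
    refine (ContinuousMap.dist_le (by positivity)).2 fun t => (dist_pi_le_iff (by positivity)).2
      fun j => ?_
    rw [dist_eq_norm]
    change ‖(c j + _) - (c j + _)‖ ≤ _
    rw [add_sub_add_left_eq_sub]
    refine (norm_integral_linearField_sub_le hM hF (hext u).continuousOn (hext v).continuousOn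
      (dist_nonneg (x := u) (y := v)) (fun s _ k => ?_) j hτ t.2).trans ?_
    · rw [← dist_eq_norm]
      exact (dist_le_pi_dist (ext u s) (ext v s) k).trans (ContinuousMap.dist_apply_le_dist _)
    · push_cast
      exact mul_le_mul_of_nonneg_right hsmall dist_nonneg
  obtain ⟨u, hu⟩ : ∃ u, T u = u := ⟨_, hT.fixedPoint_isFixedPt⟩
  have hsol : ∀ t ∈ Icc x y, ext u t = fun j => c j + ∫ s in τ..t, linearField M F (ext u) j s :=
    fun t ht => by
      simp only [ext, projIcc_of_mem hxy ht]
      exact (ContinuousMap.congr_fun hu ⟨t, ht⟩).symm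
  refine ⟨ext u, hext u, by simpa using hsol τ hτ, fun j => ?_⟩
  exact eq_add_intervalIntegral_of_eq_add
    (integrableOn_linearField hM hF (hext u).continuousOn j) hτ fun t ht => congr_fun (hsol t ht) j

lemma _root_.Continuous.if_le_of_eq {X : Type*} [TopologicalSpace X] {w v : ℝ → X} {z : ℝ}
    (hwc : Continuous w) (hvc : Continuous v) (hwv : w z = v z) :
    Continuous fun s => if s ≤ z then w s else v s :=
  Continuous.if_le hwc hvc continuous_id continuous_const fun s (hs : s = z) => by
    subst hs; exact hwv

lemma SolvesOn.piecewise {z : ℝ} (hxz : x ≤ z) (hzy : z ≤ y)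
    (hM : ∀ j k, IntegrableOn (fun t => M t j k) (Icc x y))
    (hF : ∀ j, IntegrableOn (F j) (Icc x y)) {w v : ℝ → Fin m → ℂ} (hwc : Continuous w)
    (hvc : Continuous v) (hwv : w z = v z) (hw : SolvesOn M F x z w) (hv : SolvesOn M F z y v) :
    SolvesOn M F x y fun s => if s ≤ z then w s else v s := by
  set W : ℝ → Fin m → ℂ := fun s => if s ≤ z then w s else v s
  have hWc : Continuous W := hwc.if_le_of_eq hvc hwv
  have hWw : ∀ s ≤ z, W s = w s := fun s hs => if_pos hs
  have hWv : ∀ s, z ≤ s → W s = v s := fun s hs => by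
    rcases hs.eq_or_lt with rfl | hlt
    · exact (if_pos le_rfl).trans hwv
    · exact if_neg (not_le.2 hlt)
  have hfield : ∀ {u : ℝ → Fin m → ℂ} {t₀ t₁ : ℝ}, (∀ s ∈ Icc t₀ t₁, W s = u s) → t₀ ≤ t₁ →
      ∀ j, ∫ s in t₀..t₁, linearField M F u j s = ∫ s in t₀..t₁, linearField M F W j s :=
    fun hu h₀₁ j => intervalIntegral.integral_congr fun s hs => by
      rw [uIcc_of_le h₀₁] at hs
      simp only [linearField, hu s hs]
  have hx : x ∈ Icc x y := left_mem_Icc.2 (hxz.trans hzy)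
  have hz : z ∈ Icc x y := ⟨hxz, hzy⟩
  intro j t ht
  rcases le_total t z with htz | hzt
  · rw [hWw t htz, hw j t ⟨ht.1, htz⟩, hWw x hxz,
      hfield (fun s hs => hWw s (hs.2.trans htz)) ht.1]
  · rw [hWv t hzt, hv j t ⟨hzt, ht.2⟩, ← hwv, hw j z ⟨hxz, le_rfl⟩, hWw x hxz,
      hfield (fun s hs => hWw s hs.2) hxz, hfield (fun s hs => hWv s hs.1) hzt, add_assoc,
      intervalIntegral.integral_add_adjacent_intervals
        (intervalIntegrable_linearField hM hF hWc.continuousOn j hx hz)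
        (intervalIntegrable_linearField hM hF hWc.continuousOn j hz ht)]

lemma exists_intervalIntegral_eq_half {g : ℝ → ℝ} (hxy : x ≤ y) (hg : IntegrableOn g (Icc x y)) :
    ∃ z ∈ Icc x y, ∫ s in x..z, g s = (∫ s in x..y, g s) / 2 := by
  have hcont : ContinuousOn (fun t => ∫ s in x..t, g s) (uIcc x y) :=
    intervalIntegral.continuousOn_primitive_interval (by rwa [uIcc_of_le hxy])
  have hhalf : (∫ s in x..y, g s) / 2 ∈ uIcc (∫ s in x..x, g s) (∫ s in x..y, g s) := by
    rw [intervalIntegral.integral_same]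
    rcases le_total 0 (∫ s in x..y, g s) with h | h
    · exact Set.mem_uIcc.2 (Or.inl ⟨by linarith, by linarith⟩)
    · exact Set.mem_uIcc.2 (Or.inr ⟨by linarith, by linarith⟩)
  obtain ⟨z, hz, hgz⟩ := intermediate_value_uIcc hcont hhalf
  exact ⟨z, by rwa [uIcc_of_le hxy] at hz, hgz⟩

/-- Bisect `[x, y]` into halves of equal `M`-mass until the contraction estimate applies. -/
lemma exists_solvesOn (hM : ∀ j k, IntegrableOn (fun t => M t j k) (Icc x y))
    (hF : ∀ j, IntegrableOn (F j) (Icc x y)) {τ : ℝ} (hτ : τ ∈ Icc x y) (c : Fin m → ℂ) :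
    ∃ w, Continuous w ∧ w τ = c ∧ SolvesOn M F x y w := by
  obtain ⟨k, hk⟩ : ∃ k : ℕ, ∫ s in x..y, entrywiseNorm M s ≤ 2 ^ k / 2 := by
    obtain ⟨k, hk⟩ := pow_unbounded_of_one_lt (2 * ∫ s in x..y, entrywiseNorm M s) one_lt_two
    exact ⟨k, by linarith⟩
  induction k generalizing x y τ c with
  | zero => exact exists_solvesOn_of_integral_le hM hF (by simpa using hk) hτ c
  | succ k ih =>
    have hxy : x ≤ y := hτ.1.trans hτ.2
    have hG := integrableOn_entrywiseNorm hM
    obtain ⟨z, hz, hhalf⟩ := exists_intervalIntegral_eq_half hxy hG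
    have hhalf' : ∫ s in z..y, entrywiseNorm M s = (∫ s in x..y, entrywiseNorm M s) / 2 := by
      rw [← intervalIntegral.integral_interval_sub_left (IntegrableOn.intervalIntegrable
          (hG.mono_set (uIcc_subset_Icc (left_mem_Icc.2 hxy) (right_mem_Icc.2 hxy))))
        (hG.mono_set (uIcc_subset_Icc (left_mem_Icc.2 hxy) hz)).intervalIntegrable, hhalf]
      ring
    have hmass : (∫ s in x..y, entrywiseNorm M s) / 2 ≤ 2 ^ k / 2 := by
      rw [pow_succ] at hk; linarith
    have ihL := fun {τ'} (hτ' : τ' ∈ Icc x z) c' =>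
      ih (fun j k => (hM j k).mono_set (Icc_subset_Icc le_rfl hz.2))
        (fun j => (hF j).mono_set (Icc_subset_Icc le_rfl hz.2)) hτ' c' (hhalf ▸ hmass)
    have ihR := fun {τ'} (hτ' : τ' ∈ Icc z y) c' =>
      ih (fun j k => (hM j k).mono_set (Icc_subset_Icc hz.1 le_rfl))
        (fun j => (hF j).mono_set (Icc_subset_Icc hz.1 le_rfl)) hτ' c' (hhalf' ▸ hmass)
    rcases le_total τ z with hτz | hzτ
    · obtain ⟨w, hwc, hwτ, hw⟩ := ihL ⟨hτ.1, hτz⟩ c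
      obtain ⟨v, hvc, hvz, hv⟩ := ihR ⟨le_rfl, hz.2⟩ (w z)
      exact ⟨_, hwc.if_le_of_eq hvc hvz.symm, by simp [hτz, hwτ],
        hw.piecewise hz.1 hz.2 hM hF hwc hvc hvz.symm hv⟩
    · obtain ⟨v, hvc, hvτ, hv⟩ := ihR ⟨hzτ, hτ.2⟩ c
      obtain ⟨w, hwc, hwz, hw⟩ := ihL ⟨hz.1, le_rfl⟩ (v z)
      refine ⟨_, hwc.if_le_of_eq hvc hwz, ?_, hw.piecewise hz.1 hz.2 hM hF hwc hvc hwz hv⟩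
      split_ifs with hτz
      · obtain rfl := le_antisymm hτz hzτ
        rw [hwz, hvτ]
      · exact hvτ

end LinearSystem

section Calculus

variable {a b : ℝ}

lemma _root_.AbsolutelyContinuousOnInterval.of_dist_le {X Y : Type*} [PseudoMetricSpace X]
    [PseudoMetricSpace Y] {f : ℝ → X} {g : ℝ → Y} (hg : AbsolutelyContinuousOnInterval g a b)
    (h : ∀ s ∈ uIcc a b, ∀ t ∈ uIcc a b, dist (f s) (f t) ≤ dist (g s) (g t)) :
    AbsolutelyContinuousOnInterval f a b := by
  refine squeeze_zero' (Eventually.of_forall fun _ => Finset.sum_nonneg fun _ _ => dist_nonneg)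
    ?_ hg
  rw [eventually_inf_principal]
  filter_upwards with E hE
  simp only [AbsolutelyContinuousOnInterval.disjWithin, mem_ofPred_eq] at hE
  exact Finset.sum_le_sum fun i hi => h _ (hE.1 i hi).1 _ (hE.1 i hi).2

lemma _root_.IntervalIntegrable.absolutelyContinuousOnInterval_primitive {E : Type*}
    [NormedAddCommGroup E] [NormedSpace ℝ E] {f : ℝ → E} (hf : IntervalIntegrable f volume a b)
    {c : ℝ} (hc : c ∈ uIcc a b) :
    AbsolutelyContinuousOnInterval (fun x => ∫ v in c..x, f v) a b := by
  refine (hf.norm.absolutelyContinuousOnInterval_intervalIntegral hc).of_dist_le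
    fun s hs t ht => ?_
  have hi : ∀ {u v}, u ∈ uIcc a b → v ∈ uIcc a b → IntervalIntegrable f volume u v :=
    fun hu hv => hf.mono_set (uIcc_subset_uIcc hu hv)
  rw [dist_eq_norm, Real.dist_eq,
    intervalIntegral.integral_interval_sub_left (hi hc hs) (hi hc ht),
    intervalIntegral.integral_interval_sub_left (hi hc hs).norm (hi hc ht).norm]
  exact intervalIntegral.norm_integral_le_abs_integral_norm

lemma absolutelyContinuousOnInterval_const {X : Type*} [PseudoMetricSpace X] (c : X) :
    AbsolutelyContinuousOnInterval (fun _ => c) a b :=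
  (LipschitzWith.const c).lipschitzOnWith.absolutelyContinuousOnInterval

/-- Integration by parts: as a function of the upper endpoint, the difference of the two sides
is absolutely continuous with derivative zero a.e. -/
lemma mul_eq_add_integral {φ ψ W Z : ℝ → ℂ} (hab : a ≤ b) (hφ : IntervalIntegrable φ volume a b)
    (hψ : IntervalIntegrable ψ volume a b) (hW : ∀ t ∈ Icc a b, W t = W a + ∫ s in a..t, φ s)
    (hZ : ∀ t ∈ Icc a b, Z t = Z a + ∫ s in a..t, ψ s) :
    W b * Z b = W a * Z a + ∫ s in a..b, (φ s * Z s + W s * ψ s) := by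
  have ha : a ∈ uIcc a b := left_mem_uIcc
  set P := fun t => W a + ∫ s in a..t, φ s
  set Q := fun t => Z a + ∫ s in a..t, ψ s
  have hP : AbsolutelyContinuousOnInterval P a b :=
    (absolutelyContinuousOnInterval_const _).fun_add
      (hφ.absolutelyContinuousOnInterval_primitive ha)
  have hQ : AbsolutelyContinuousOnInterval Q a b :=
    (absolutelyContinuousOnInterval_const _).fun_add
      (hψ.absolutelyContinuousOnInterval_primitive ha)
  set h := fun s => φ s * Q s + P s * ψ s
  have hh : IntervalIntegrable h volume a b :=
    (hφ.mul_continuousOn hQ.continuousOn).add (hψ.continuousOn_mul hP.continuousOn)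
  have hderiv : ∀ᵐ x, x ∈ uIcc a b →
      HasDerivAt (fun t => P t * Q t - ∫ s in a..t, h s) 0 x := by
    filter_upwards [hφ.ae_hasDerivAt_integral, hψ.ae_hasDerivAt_integral,
      hh.ae_hasDerivAt_integral] with x hφx hψx hhx hx
    rw [show (0 : ℂ) = φ x * Q x + P x * ψ x - h x from (sub_self _).symm]
    exact (((hφx hx a ha).const_add (W a)).mul ((hψx hx a ha).const_add (Z a))).sub
      (hhx hx a ha)
  obtain ⟨C, hC⟩ := ((hP.fun_smul hQ).fun_sub (hh.absolutelyContinuousOnInterval_primitive ha)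
    |>.const_of_ae_hasDerivAt_zero hderiv)
  have hconst := (hC b right_mem_uIcc).trans (hC a ha).symm
  have hcongr : ∫ s in a..b, (φ s * Z s + W s * ψ s) = ∫ s in a..b, h s :=
    intervalIntegral.integral_congr fun s hs => by
      rw [uIcc_of_le hab] at hs
      simp only [h, P, Q, ← hW s hs, ← hZ s hs]
  simp only [P, Q, intervalIntegral.integral_same, add_zero, smul_eq_mul] at hconst
  rw [hcongr, hW b (right_mem_Icc.2 hab), hZ b (right_mem_Icc.2 hab)]
  linear_combination hconst

lemma ae_eq_zero_of_intervalIntegral_eq_zero {E : Type*} [NormedAddCommGroup E]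
    [NormedSpace ℝ E] [CompleteSpace E] {g : ℝ → E} (hab : a ≤ b)
    (hg : IntervalIntegrable g volume a b)
    (h : ∀ t ∈ Icc a b, ∫ s in a..t, g s = 0) : ∀ᵐ s ∂volume.restrict (Icc a b), g s = 0 := by
  rw [← Measure.restrict_congr_set Ioo_ae_eq_Icc, ae_restrict_iff' measurableSet_Ioo]
  filter_upwards [hg.ae_hasDerivAt_integral] with x hx hxI
  have hprim : (fun t => ∫ s in a..t, g s) =ᶠ[𝓝 x] fun _ => 0 :=
    Filter.eventually_of_mem (Ioo_mem_nhds hxI.1 hxI.2) fun t ht => h t (Ioo_subset_Icc_self ht)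
  exact (hx (by rw [uIcc_of_le hab]; exact Ioo_subset_Icc_self hxI) a left_mem_uIcc).unique
    ((hasDerivAt_const x (0 : E)).congr_of_eventuallyEq hprim)

lemma eqOn_zero_of_integral_conj_mul_self {g : ℝ → ℂ} (hab : a < b)
    (hg : ContinuousOn g (Icc a b)) (h : ∫ s in a..b, conj (g s) * g s = 0) :
    EqOn g 0 (Icc a b) := by
  have hnorm : IntervalIntegrable (fun s => ‖g s‖ ^ 2) volume a b :=
    (hg.norm.pow 2).intervalIntegrable_of_Icc hab.le
  simp_rw [Complex.conj_mul', ← Complex.ofReal_pow, intervalIntegral.integral_ofReal,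
    Complex.ofReal_eq_zero] at h
  have hae := (intervalIntegral.integral_eq_zero_iff_of_le_of_nonneg_ae hab.le
    (Eventually.of_forall fun s => by positivity) hnorm).1 h
  rw [Measure.restrict_congr_set Ioc_ae_eq_Icc] at hae
  refine Measure.eqOn_Icc_of_ae_eq volume hab.ne ?_ hg continuousOn_const
  filter_upwards [hae] with s hs
  simpa using hs

lemma memLp_muab_of_continuousOn {g : ℝ → ℂ} (hg : ContinuousOn g (Icc a b))
    (p : ENNReal) : MemLp g p (muab a b) := by
  obtain ⟨C, hC⟩ := isCompact_Icc.exists_bound_of_continuousOn hg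
  unfold muab
  exact MemLp.of_bound (hg.aestronglyMeasurable measurableSet_Icc) C
    (ae_restrict_of_forall_mem measurableSet_Icc hC)

end Calculus

section QuasiDerivatives

variable {m : ℕ} {a b : ℝ} {A : ℝ → Matrix (Fin m) (Fin m) ℂ}

/-- The inhomogeneity `f eₘ` of the first-order system `w' = A w + f eₘ` satisfied by the
quasi-derivatives. -/
def lastForcing (m : ℕ) (f : ℝ → ℂ) : Fin m → ℝ → ℂ := fun j s =>
  if (j : ℕ) + 1 = m then f s else 0

def lastIndex (m : ℕ) [NeZero m] : Fin m := ⟨m - 1, Nat.sub_one_lt (NeZero.ne m)⟩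

lemma integrableOn_lastForcing {f : ℝ → ℂ} {S : Set ℝ} (hf : IntegrableOn f S) (j : Fin m) :
    IntegrableOn (lastForcing m f j) S := by
  unfold lastForcing
  split_ifs
  exacts [hf, integrableOn_zero]

lemma sum_lastForcing_mul [NeZero m] (f : ℝ → ℂ) (s : ℝ) (v : Fin m → ℂ) :
    ∑ j, lastForcing m f j s * v j = f s * v (lastIndex m) := by
  rw [Finset.sum_eq_single (lastIndex m)]
  · simp [lastForcing, lastIndex, Nat.sub_add_cancel (NeZero.one_le)]
  · intro j _ hj
    simp only [lastForcing, ite_mul, zero_mul, ite_eq_right_iff]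
    exact fun hjm => absurd (Fin.ext (by simp [lastIndex]; omega)) hj
  · simp

lemma _root_.HasQD.solvesOn {y : ℝ → ℂ} {w : Fin m → ℝ → ℂ} {f : ℝ → ℂ}
    (h : HasQD a b A y w f) :
    SolvesOn A (lastForcing m f) a b fun s j => w j s :=
  fun j => (h.2.2 j).2

lemma _root_.HasQD.intervalIntegrable_linearField {y : ℝ → ℂ} {w : Fin m → ℝ → ℂ} {f : ℝ → ℂ}
    (h : HasQD a b A y w f) (hab : a ≤ b) (j : Fin m) :
    IntervalIntegrable (linearField A (lastForcing m f) (fun s j => w j s) j) volume a b :=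
  (intervalIntegrable_iff_integrableOn_Icc_of_le hab).2 (h.2.2 j).1

lemma _root_.HasQD.continuousOn {y : ℝ → ℂ} {w : Fin m → ℝ → ℂ} {f : ℝ → ℂ}
    (h : HasQD a b A y w f) (hab : a ≤ b) (j : Fin m) : ContinuousOn (w j) (Icc a b) := by
  have hprim := intervalIntegral.continuousOn_primitive_interval (a := a) (b := b)
    ((h.2.2 j).1.mono_set (uIcc_of_le hab).subset)
  rw [uIcc_of_le hab] at hprim
  exact (continuousOn_const.add hprim).congr (HasQD.solvesOn h j)

lemma sum_linearField_mul_add_mul_adjoint (M : ℝ → Matrix (Fin m) (Fin m) ℂ)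
    (F : Fin m → ℝ → ℂ) (u v : ℝ → Fin m → ℂ) (s : ℝ) :
    ∑ j, (linearField M F u j s * v s j + u s j * linearField (fun s => -(M s)ᵀ) 0 v j s) =
      ∑ j, F j s * v s j := by
  simp only [linearField, Pi.zero_apply, add_zero, Matrix.neg_apply, Matrix.transpose_apply,
    add_mul, Finset.sum_mul, Finset.mul_sum, Finset.sum_add_distrib]
  rw [Finset.sum_comm (f := fun j k => u s j * (-M s k j * v s k))]
  simp only [← Finset.sum_add_distrib]
  refine Finset.sum_congr rfl fun j _ => ?_
  rw [add_comm, ← add_assoc, ← Finset.sum_add_distrib]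
  simp [mul_comm, mul_left_comm]

/-- The Lagrange identity: in `(∑ⱼ wⱼ zⱼ)'` the `A`-terms cancel against the adjoint system. -/
lemma _root_.HasQD.lagrange [NeZero m] {y : ℝ → ℂ} {w : Fin m → ℝ → ℂ} {f : ℝ → ℂ}
    (h : HasQD a b A y w f) (hab : a ≤ b) (hA : ∀ j k, IntegrableOn (fun t => A t j k) (Icc a b))
    {z : ℝ → Fin m → ℂ} (hzc : ContinuousOn z (Icc a b))
    (hz : SolvesOn (fun s => -(A s)ᵀ) 0 a b z) :
    ∑ j, w j b * z b j = ∑ j, w j a * z a j + ∫ s in a..b, f s * z s (lastIndex m) := by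
  have hψ : ∀ j, IntervalIntegrable (linearField (fun s => -(A s)ᵀ) 0 z j) volume a b :=
    fun j => ShinZettl.intervalIntegrable_linearField (fun j k => (hA k j).neg)
      (fun _ => integrableOn_zero) hzc j (left_mem_Icc.2 hab) (right_mem_Icc.2 hab)
  have hzj : ∀ j, ContinuousOn (fun s => z s j) (uIcc a b) := fun j =>
    (continuous_apply j).comp_continuousOn (by rwa [uIcc_of_le hab])
  have hwj : ∀ j, ContinuousOn (w j) (uIcc a b) := fun j => by
    rw [uIcc_of_le hab]; exact h.continuousOn hab j
  rw [Finset.sum_congr rfl fun j _ => mul_eq_add_integral hab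
      (h.intervalIntegrable_linearField hab j) (hψ j) (HasQD.solvesOn h j) (hz j),
    Finset.sum_add_distrib, ← intervalIntegral.integral_finsetSum fun j _ =>
      ((h.intervalIntegrable_linearField hab j).mul_continuousOn (hzj j)).add
        ((hψ j).continuousOn_mul (hwj j))]
  congr 2 with s
  rw [sum_linearField_mul_add_mul_adjoint A (lastForcing m f) (fun s j => w j s) z s,
    sum_lastForcing_mul]

lemma exists_hasQD_of_initial_values [NeZero m] (hab : a ≤ b)
    (hA : ∀ j k, IntegrableOn (fun t => A t j k) (Icc a b)) {f : ℝ → ℂ}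
    (hf : IntegrableOn f (Icc a b)) (c : Fin m → ℂ) :
    ∃ w : Fin m → ℝ → ℂ, (∀ j, w j a = c j) ∧ HasQD a b A (w 0) w f := by
  obtain ⟨W, hWc, hWa, hW⟩ :=
    exists_solvesOn hA (integrableOn_lastForcing hf) (left_mem_Icc.2 hab) c
  refine ⟨fun j t => W t j, fun j => congr_fun hWa j, fun j hj => ?_, hf, fun j =>
    ⟨integrableOn_linearField hA (integrableOn_lastForcing hf) hWc.continuousOn j, hW j⟩⟩
  rw [show j = 0 from Fin.ext (by rw [hj, Fin.val_zero])]

lemma _root_.HasQD.add {y₁ y₂ : ℝ → ℂ} {w₁ w₂ : Fin m → ℝ → ℂ} {f₁ f₂ : ℝ → ℂ}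
    (h₁ : HasQD a b A y₁ w₁ f₁) (h₂ : HasQD a b A y₂ w₂ f₂) :
    HasQD a b A (y₁ + y₂) (w₁ + w₂) (f₁ + f₂) := by
  obtain ⟨hy₁, hf₁, h₁⟩ := h₁
  obtain ⟨hy₂, hf₂, h₂⟩ := h₂
  refine ⟨fun j hj => by rw [Pi.add_apply, hy₁ j hj, hy₂ j hj], hf₁.add hf₂, fun j => ?_⟩
  have hfield : (fun s => ∑ k, A s j k * (w₁ + w₂) k s +
      if (j : ℕ) + 1 = m then (f₁ + f₂) s else 0) = fun s =>
      (∑ k, A s j k * w₁ k s + if (j : ℕ) + 1 = m then f₁ s else 0) +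
      (∑ k, A s j k * w₂ k s + if (j : ℕ) + 1 = m then f₂ s else 0) := by
    ext s
    simp only [Pi.add_apply, mul_add, Finset.sum_add_distrib]
    split_ifs <;> ring
  have hii : ∀ {t}, t ∈ Icc a b → ∀ {g : ℝ → ℂ}, IntegrableOn g (Icc a b) →
      IntervalIntegrable g volume a t := fun ht _ hg =>
    (intervalIntegrable_iff_integrableOn_Icc_of_le ht.1).2
      (hg.mono_set (Icc_subset_Icc le_rfl ht.2))
  rw [hfield]
  refine ⟨(h₁ j).1.add (h₂ j).1, fun t ht => ?_⟩
  simp only [Pi.add_apply]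
  rw [(h₁ j).2 t ht, (h₂ j).2 t ht,
    intervalIntegral.integral_add (hii ht (h₁ j).1) (hii ht (h₂ j).1)]
  ring

lemma _root_.HasQD.const_smul {y : ℝ → ℂ} {w : Fin m → ℝ → ℂ} {f : ℝ → ℂ}
    (h : HasQD a b A y w f) (c : ℂ) : HasQD a b A (c • y) (c • w) (c • f) := by
  obtain ⟨hy, hf, h⟩ := h
  refine ⟨fun j hj => by rw [Pi.smul_apply, hy j hj], hf.const_mul c, fun j => ?_⟩
  have hfield : (fun s => ∑ k, A s j k * (c • w) k s +
      if (j : ℕ) + 1 = m then (c • f) s else 0) = fun s =>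
      c * (∑ k, A s j k * w k s + if (j : ℕ) + 1 = m then f s else 0) := by
    ext s
    simp only [Pi.smul_apply, smul_eq_mul, mul_add, Finset.mul_sum]
    split_ifs <;> simp [mul_left_comm]
  rw [hfield]
  refine ⟨(h j).1.const_mul c, fun t ht => ?_⟩
  simp only [Pi.smul_apply, smul_eq_mul]
  rw [(h j).2 t ht, intervalIntegral.integral_const_mul, mul_add]

lemma hasQD_zero : HasQD a b A 0 0 0 :=
  ⟨fun _ _ => rfl, integrableOn_zero, fun j => by simp⟩

/-- One step of the downward induction: the `(j+1)`-st adjoint equation reads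
`z_{j+1}' = -a_{j,j+1} z_j` once the higher components vanish, and `a_{j,j+1} ≠ 0` a.e. -/
lemma eqOn_zero_of_solvesOn_adjoint_of_succ (hSZ : IsShinZettl a b A) (hab : a < b)
    {z : ℝ → Fin m → ℂ} (hzc : ContinuousOn z (Icc a b))
    (hz : SolvesOn (fun s => -(A s)ᵀ) 0 a b z) {j : Fin m} (hj : (j : ℕ) + 1 < m)
    (hhigher : ∀ k : Fin m, j < k → EqOn (fun t => z t k) 0 (Icc a b)) :
    EqOn (fun t => z t j) 0 (Icc a b) := by
  set K : Fin m := ⟨j + 1, hj⟩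
  have hzK := hhigher K (Fin.lt_def.2 (Nat.lt_succ_self j))
  have hzj : ContinuousOn (fun t => z t j) (Icc a b) := (continuous_apply j).comp_continuousOn hzc
  have hfield : ∀ s ∈ Icc a b, linearField (fun s => -(A s)ᵀ) 0 z K s = -(A s j K * z s j) := by
    intro s hs
    simp only [linearField, Pi.zero_apply, add_zero, Matrix.neg_apply, Matrix.transpose_apply]
    rw [Finset.sum_eq_single j]
    · ring
    · intro k _ hkj
      rcases lt_or_gt_of_ne hkj with hlt | hgt
      · rw [hSZ.eq_zero_of_gt k K (by simp only [K]; omega) s]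
        ring
      · simp [show z s k = 0 from hhigher k hgt hs]
    · simp
  have hint : ∀ t ∈ Icc a b, ∫ s in a..t, -(A s j K * z s j) = 0 := by
    intro t ht
    have hKt := hz K t ht
    rw [show z t K = 0 from hzK ht, show z a K = 0 from hzK (left_mem_Icc.2 hab.le),
      intervalIntegral.integral_congr fun s hs =>
      hfield s (uIcc_subset_Icc (left_mem_Icc.2 hab.le) ht hs)] at hKt
    simpa using hKt.symm
  have hae := ae_eq_zero_of_intervalIntegral_eq_zero hab.le
    ((intervalIntegrable_iff_integrableOn_Icc_of_le hab.le).2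
      ((hSZ.integrable j K).mul_continuousOn hzj isCompact_Icc).neg) hint
  refine Measure.eqOn_Icc_of_ae_eq volume hab.ne ?_ hzj continuousOn_const
  filter_upwards [hae, hSZ.superdiag_ne_zero j K rfl] with s hs hA
  simpa [hA] using hs

lemma eqOn_zero_of_solvesOn_adjoint [NeZero m] (hSZ : IsShinZettl a b A) (hab : a < b)
    {z : ℝ → Fin m → ℂ} (hzc : ContinuousOn z (Icc a b))
    (hz : SolvesOn (fun s => -(A s)ᵀ) 0 a b z)
    (hlast : EqOn (fun t => z t (lastIndex m)) 0 (Icc a b)) (j : Fin m) :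
    EqOn (fun t => z t j) 0 (Icc a b) := by
  suffices h : ∀ d : ℕ, ∀ j : Fin m, m ≤ j + 1 + d → EqOn (fun t => z t j) 0 (Icc a b) from
    h m j (by omega)
  intro d
  induction d with
  | zero =>
    intro j hj
    rwa [show j = lastIndex m from Fin.ext (by simp only [lastIndex]; omega)]
  | succ d ih =>
    intro j hj
    by_cases hjd : m ≤ j + 1 + d
    · exact ih j hjd
    · exact eqOn_zero_of_solvesOn_adjoint_of_succ hSZ hab hzc hz (by omega)
        fun k hk => ih k (by rw [Fin.lt_def] at hk; omega)

/-- For the adjoint solution with `z(b) = pb`, the Lagrange identity turns the hypothesis into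
`pa = -z(a)` and `∫ f z_m = 0` for every admissible `f`. -/
lemma eq_zero_of_forall_hasQD_boundary_sum_eq_zero [NeZero m] (hSZ : IsShinZettl a b A)
    (hab : a < b) {pa pb : Fin m → ℂ}
    (h : ∀ y w f, HasQD a b A y w f → MemLp f 2 (muab a b) →
      ∑ i, w i a * pa i + ∑ i, w i b * pb i = 0) :
    pa = 0 ∧ pb = 0 := by
  obtain ⟨z, hzc, hzb, hz⟩ := exists_solvesOn (F := 0) (fun j k => (hSZ.integrable k j).neg)
    (fun _ => integrableOn_zero) (right_mem_Icc.2 hab.le) pb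
  have hkey : ∀ y w f, HasQD a b A y w f → MemLp f 2 (muab a b) →
      ∑ i, w i a * (pa i + z a i) + ∫ s in a..b, f s * z s (lastIndex m) = 0 := by
    intro y w f hw hf
    have hsum := h y w f hw hf
    rw [← hzb, hw.lagrange hab.le hSZ.integrable hzc.continuousOn hz] at hsum
    simp only [mul_add, Finset.sum_add_distrib]
    linear_combination hsum
  have hpa : ∀ i, pa i + z a i = 0 := by
    intro i
    obtain ⟨w, hwa, hw⟩ :=
      exists_hasQD_of_initial_values hab.le hSZ.integrable integrableOn_zero (Pi.single i 1)
    simpa [hwa, Pi.single_apply] using hkey _ w 0 hw MemLp.zero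
  have hlast : EqOn (fun t => z t (lastIndex m)) 0 (Icc a b) := by
    have hzm : Continuous fun s => z s (lastIndex m) := (continuous_apply _).comp hzc
    have hg : ContinuousOn (fun s => conj (z s (lastIndex m))) (Icc a b) :=
      (Complex.continuous_conj.comp hzm).continuousOn
    obtain ⟨w, hwa, hw⟩ :=
      exists_hasQD_of_initial_values hab.le hSZ.integrable hg.integrableOn_Icc 0
    have hint := hkey _ w _ hw (memLp_muab_of_continuousOn hg 2)
    simp only [hwa, Pi.zero_apply, zero_mul, Finset.sum_const_zero, zero_add] at hint
    exact eqOn_zero_of_integral_conj_mul_self hab hzm.continuousOn hint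
  have hz0 := eqOn_zero_of_solvesOn_adjoint hSZ hab hzc.continuousOn hz hlast
  refine ⟨funext fun i => ?_, hzb ▸ funext fun i => hz0 i (right_mem_Icc.2 hab.le)⟩
  simpa [show z a i = 0 from hz0 i (left_mem_Icc.2 hab.le)] using hpa i

def boundaryData (a b : ℝ) (A : ℝ → Matrix (Fin m) (Fin m) ℂ) :
    Submodule ℂ (Fin m ⊕ Fin m → ℂ) where
  carrier := {v | ∃ y w f, HasQD a b A y w f ∧ MemLp f 2 (muab a b) ∧
    Sum.elim (fun i => w i a) (fun i => w i b) = v}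
  add_mem' := by
    rintro _ _ ⟨y, w, f, hw, hf, rfl⟩ ⟨y', w', f', hw', hf', rfl⟩
    exact ⟨_, _, _, hw.add hw', hf.add hf', by ext (i | i) <;> rfl⟩
  zero_mem' := ⟨0, 0, 0, hasQD_zero, MemLp.zero, by ext (i | i) <;> rfl⟩
  smul_mem' := by
    rintro c _ ⟨y, w, f, hw, hf, rfl⟩
    exact ⟨_, _, _, hw.const_smul c, hf.const_smul c, by ext (i | i) <;> rfl⟩

lemma _root_.Submodule.eq_top_of_forall_sum_mul_eq_zero {K ι : Type*} [Field K] [Fintype ι]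
    [DecidableEq ι] {V : Submodule K (ι → K)}
    (h : ∀ p : ι → K, (∀ v ∈ V, ∑ i, v i * p i = 0) → p = 0) : V = ⊤ := by
  by_contra hV
  obtain ⟨ℓ, hℓ, hVℓ⟩ := V.exists_le_ker_of_lt_top (lt_top_iff_ne_top.2 hV)
  have hp := h (fun i => ℓ fun j => if i = j then 1 else 0) fun v hv => by
    simpa [LinearMap.pi_apply_eq_sum_univ ℓ v] using hVℓ hv
  exact hℓ (LinearMap.ext fun v => by simp [LinearMap.pi_apply_eq_sum_univ ℓ v, congr_fun hp])

lemma boundaryData_eq_top [NeZero m] (hSZ : IsShinZettl a b A) (hab : a < b) :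
    boundaryData a b A = ⊤ := by
  refine Submodule.eq_top_of_forall_sum_mul_eq_zero fun p hp => ?_
  obtain ⟨hpa, hpb⟩ := eq_zero_of_forall_hasQD_boundary_sum_eq_zero hSZ hab
    (pa := fun i => p (Sum.inl i)) (pb := fun i => p (Sum.inr i)) fun y w f hw hf => by
      simpa [Fintype.sum_sum_type] using hp _ ⟨y, w, f, hw, hf, rfl⟩
  ext (i | i)
  exacts [congr_fun hpa i, congr_fun hpb i]

theorem exists_hasQD_of_boundary_values [NeZero m] (hSZ : IsShinZettl a b A) (hab : a < b)
    (va vb : Fin m → ℂ) :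
    ∃ y w f, HasQD a b A y w f ∧ MemLp f 2 (muab a b) ∧
      (∀ i, w i a = va i) ∧ ∀ i, w i b = vb i := by
  obtain ⟨y, w, f, hw, hf, hv⟩ : Sum.elim va vb ∈ boundaryData a b A :=
    boundaryData_eq_top hSZ hab ▸ Submodule.mem_top
  exact ⟨y, w, f, hw, hf, fun i => congr_fun hv (.inl i), fun i => congr_fun hv (.inr i)⟩

end QuasiDerivatives

section BoundaryMaps

lemma exists_boundary_values_gammaE (a b : ℝ) {n : ℕ} (f₁ f₂ : Fin (2 * n) → ℂ) :
    ∃ va vb : Fin (2 * n) → ℂ, ∀ w : Fin (2 * n) → ℝ → ℂ,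
      (∀ i, w i a = va i) → (∀ i, w i b = vb i) → Gamma1E a b w = f₁ ∧ Gamma2E a b w = f₂ := by
  have hc : ∀ e : ℕ, Complex.I ^ (2 * n) * (-1) ^ e ≠ 0 := fun e => by simp
  refine ⟨fun k => if (k : ℕ) < n then f₂ k else
      f₁ ⟨2 * n - 1 - k, by have := k.isLt; omega⟩ /
        (Complex.I ^ (2 * n) * (-1) ^ (2 * n - 1 - k + 1)),
    fun k => if h : (k : ℕ) < n then f₂ ⟨k + n, by omega⟩ else
      f₁ ⟨3 * n - 1 - k, by have := k.isLt; omega⟩ /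
        (Complex.I ^ (2 * n) * (-1) ^ (3 * n - 1 - k - n)),
    fun w hwa hwb => ⟨funext fun j => ?_, funext fun j => ?_⟩⟩ <;> have := j.isLt
  · simp only [Gamma1E, hwa, hwb]
    split_ifs <;> try omega
    · simp only [show 2 * n - 1 - (2 * n - 1 - j) = j by omega, Fin.eta]
      exact mul_div_cancel₀ _ (hc _)
    · simp only [show 3 * n - 1 - (2 * n - 1 - (j - n)) = j by omega, Fin.eta]
      exact mul_div_cancel₀ _ (hc _)
  · simp only [Gamma2E, hwa, hwb]
    split_ifs <;> try omega
    · rfl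
    · congr; omega

lemma exists_mul_add_mul_eq_of_det_ne_zero {K : Type*} [Field K] {α β γ δ : K}
    (h : α * δ - β * γ ≠ 0) (p q : K) : ∃ x y, α * x + β * y = p ∧ γ * x + δ * y = q :=
  ⟨(δ * p - β * q) / (α * δ - β * γ), (α * q - γ * p) / (α * δ - β * γ),
    by rw [mul_div_assoc', mul_div_assoc', ← add_div, div_eq_iff h]; ring,
    by rw [mul_div_assoc', mul_div_assoc', ← add_div, div_eq_iff h]; ring⟩

lemma exists_boundary_values_gammaO (a b : ℝ) {n : ℕ} {α β γ δ : ℂ} (hdet : α * δ - β * γ ≠ 0)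
    (f₁ f₂ : Fin (2 * n + 1) → ℂ) :
    ∃ va vb : Fin (2 * n + 1) → ℂ, ∀ w : Fin (2 * n + 1) → ℝ → ℂ,
      (∀ i, w i a = va i) → (∀ i, w i b = vb i) →
        Gamma1O a b α β w = f₁ ∧ Gamma2O a b γ δ w = f₂ := by
  have hc : ∀ e : ℕ, Complex.I ^ (2 * n + 1) * (-1) ^ e ≠ 0 := fun e => by simp
  obtain ⟨x, y, hx, hy⟩ := exists_mul_add_mul_eq_of_det_ne_zero hdet
    (f₁ (Fin.last _) / Complex.I ^ (2 * n + 1)) (f₂ (Fin.last _))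
  refine ⟨fun k => if (k : ℕ) < n then f₂ k else if (k : ℕ) = n then y else
      f₁ ⟨2 * n - k, by omega⟩ / (Complex.I ^ (2 * n + 1) * (-1) ^ (2 * n - k + 1)),
    fun k => if h : (k : ℕ) < n then f₂ ⟨k + n, by omega⟩ else if (k : ℕ) = n then x else
      f₁ ⟨3 * n - k, by have := k.isLt; omega⟩ /
        (Complex.I ^ (2 * n + 1) * (-1) ^ (3 * n - k - n)),
    fun w hwa hwb => ⟨funext fun j => ?_, funext fun j => ?_⟩⟩ <;> have := j.isLt
  · simp only [Gamma1O, hwa, hwb]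
    split_ifs <;> try omega
    · simp only [show 2 * n - (2 * n - j) = j by omega, Fin.eta]
      exact mul_div_cancel₀ _ (hc _)
    · simp only [show 3 * n - (2 * n - (j - n)) = j by omega, Fin.eta]
      exact mul_div_cancel₀ _ (hc _)
    · rw [hx, mul_div_cancel₀ _ (pow_ne_zero _ Complex.I_ne_zero),
        show j = Fin.last _ from Fin.ext (by simp; omega)]
  · simp only [Gamma2O, hwa, hwb]
    split_ifs <;> try omega
    · rfl
    · congr; omega
    · rw [hy, show j = Fin.last _ from Fin.ext (by simp; omega)]

end BoundaryMaps

end ShinZettl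

/-- **Joint surjectivity of the boundary maps** `(Γ₁, Γ₂) : Dom(L_max) → ℂ^m × ℂ^m`.
For a formally self-adjoint Shin–Zettl matrix `A = A⁺` on `[a,b]` — of even order `m = 2n`
with `n ≥ 2`, or of odd order `m = 2n+1` with `n ≥ 1` and coefficients `α, β, γ, δ` with
`αδ − βγ ≠ 0` — and for any `f₁, f₂ ∈ ℂ^m` there exists `y ∈ Dom(L_max)` (with
quasi-derivative data `w, f`) such that `Γ₁y = f₁` and `Γ₂y = f₂`. -/
theorem boundary_maps_jointly_surjective (a b : ℝ) (hab : a < b) :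
    (∀ (n : ℕ), 2 ≤ n →
      ∀ A : ℝ → Matrix (Fin (2 * n)) (Fin (2 * n)) ℂ, IsShinZettl a b A →
        (∀ t : ℝ, formalAdjoint A t = A t) →
        ∀ f₁ f₂ : Fin (2 * n) → ℂ,
          ∃ (y : ℝ → ℂ) (w : Fin (2 * n) → ℝ → ℂ) (f : ℝ → ℂ),
            HasQD a b A y w f ∧ MeasureTheory.MemLp f 2 (muab a b) ∧
            Gamma1E a b w = f₁ ∧ Gamma2E a b w = f₂) ∧
    (∀ (n : ℕ), 1 ≤ n →
      ∀ A : ℝ → Matrix (Fin (2 * n + 1)) (Fin (2 * n + 1)) ℂ, IsShinZettl a b A →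
        (∀ t : ℝ, formalAdjoint A t = A t) →
        ∀ αc βc γc δc : ℂ, αc * δc - βc * γc ≠ 0 →
          ∀ f₁ f₂ : Fin (2 * n + 1) → ℂ,
            ∃ (y : ℝ → ℂ) (w : Fin (2 * n + 1) → ℝ → ℂ) (f : ℝ → ℂ),
              HasQD a b A y w f ∧ MeasureTheory.MemLp f 2 (muab a b) ∧
              Gamma1O a b αc βc w = f₁ ∧ Gamma2O a b γc δc w = f₂) := by
  refine ⟨fun n hn A hSZ _ f₁ f₂ => ?_, fun n _ A hSZ _ α β γ δ hdet f₁ f₂ => ?_⟩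
  · have : NeZero (2 * n) := ⟨by omega⟩
    obtain ⟨va, vb, hΓ⟩ := ShinZettl.exists_boundary_values_gammaE a b f₁ f₂
    obtain ⟨y, w, f, hw, hf, hwa, hwb⟩ :=
      ShinZettl.exists_hasQD_of_boundary_values hSZ hab va vb
    exact ⟨y, w, f, hw, hf, hΓ w hwa hwb⟩
  · obtain ⟨va, vb, hΓ⟩ := ShinZettl.exists_boundary_values_gammaO a b hdet f₁ f₂
    obtain ⟨y, w, f, hw, hf, hwa, hwb⟩ :=
      ShinZettl.exists_hasQD_of_boundary_values hSZ hab va vb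
    exact ⟨y, w, f, hw, hf, hΓ w hwa hwb⟩

end
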